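/- Let X be a measurable space in which all singletons are measurable, H a real Hilbert space, and φ : X → H a strongly measurable map. Assume the kernel mean embedding map P ↦ ∫ φ dP is injective on the set of finite signed measures P on X for which φ is Bochner integrable. Let P be such a finite signed measure, let z_1, …, z_N ∈ X be pairwise distinct, and suppose ∫ φ dP = Σ_{i=1}^N α_i φ(z_i) for some α_1, …, α_N ∈ ℝ. Then P is a probability measure if and only if Σ_{i=1}^N α_i = 1 and α_i ≥ 0 for every i. -/
import Mathlib


open MeasureTheory
open scoped ENNReal NNReal

/-- The kernel mean embedding of a finite signed measure `P`, defined via the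
Jordan decomposition as `∫ φ dP⁺ - ∫ φ dP⁻`. -/
noncomputable def kmeSigned {X H : Type*} [MeasurableSpace X]
    [NormedAddCommGroup H] [InnerProductSpace ℝ H] [CompleteSpace H]
    (φ : X → H) (P : SignedMeasure X) : H :=
  (∫ x, φ x ∂P.toJordanDecomposition.posPart) -
    ∫ x, φ x ∂P.toJordanDecomposition.negPart

/-- `φ` is Bochner integrable with respect to the finite signed measure `P`. -/
def kmeIntegrable {X H : Type*} [MeasurableSpace X]
    [NormedAddCommGroup H] [InnerProductSpace ℝ H] [CompleteSpace H]
    (φ : X → H) (P : SignedMeasure X) : Prop :=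
  Integrable φ P.toJordanDecomposition.posPart ∧
    Integrable φ P.toJordanDecomposition.negPart

/-- if the kernel mean embedding is injective on the finite signed
measures for which `φ` is Bochner integrable, a finite signed measure `P` whose
embedding is `∑ αᵢ φ(zᵢ)` (with `zᵢ` pairwise distinct) is a probability measure
iff `∑ αᵢ = 1` and all `αᵢ ≥ 0`. -/
theorem stmt1 {X H : Type*} [MeasurableSpace X] [MeasurableSingletonClass X]
    [NormedAddCommGroup H] [InnerProductSpace ℝ H] [CompleteSpace H]
    (φ : X → H) (hφ : StronglyMeasurable φ)
    (hinj : ∀ P Q : SignedMeasure X, kmeIntegrable φ P → kmeIntegrable φ Q →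
      kmeSigned φ P = kmeSigned φ Q → P = Q)
    (P : SignedMeasure X) (hPint : kmeIntegrable φ P)
    {N : ℕ} (z : Fin N → X) (hz : Function.Injective z) (α : Fin N → ℝ)
    (hemb : kmeSigned φ P = ∑ i, α i • φ (z i)) :
    ((∀ s : Set X, MeasurableSet s → 0 ≤ P s) ∧ P Set.univ = 1) ↔
      ((∑ i, α i) = 1 ∧ ∀ i, 0 ≤ α i) := by
  classical
  -- integrability against diracs
  have hdir : ∀ x : X, Integrable φ (Measure.dirac x) := by
    intro x
    refine (integrable_const (φ x)).congr ?_
    rw [Filter.EventuallyEq, ae_dirac_eq]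
    exact Filter.eventually_pure.2 rfl
  -- the two discrete measures
  set μp : Measure X := ∑ i, (((α i).toNNReal : ℝ≥0∞)) • Measure.dirac (z i) with hμp
  set μm : Measure X := ∑ i, (((-α i).toNNReal : ℝ≥0∞)) • Measure.dirac (z i) with hμm
  have happ : ∀ (c : Fin N → ℝ) (s : Set X),
      ((∑ i, (((c i).toNNReal : ℝ≥0∞)) • Measure.dirac (z i)) s).toReal
        = ∑ i, if z i ∈ s then ((c i).toNNReal : ℝ) else 0 := by
    intro c s
    rw [Measure.finset_sum_apply]
    rw [ENNReal.toReal_sum]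
    · refine Finset.sum_congr rfl fun i _ => ?_
      rw [Measure.smul_apply, Measure.dirac_apply, Set.indicator_apply]
      by_cases h : z i ∈ s <;> simp [h]
    · intro i _
      rw [Measure.smul_apply, Measure.dirac_apply, Set.indicator_apply]
      by_cases h : z i ∈ s <;> simp [h]
  have hfin : ∀ (c : Fin N → ℝ),
      IsFiniteMeasure (∑ i, (((c i).toNNReal : ℝ≥0∞)) • Measure.dirac (z i)) := by
    intro c
    constructor
    rw [Measure.finset_sum_apply]
    refine (ENNReal.sum_lt_top).2 fun i _ => ?_
    rw [Measure.smul_apply]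
    exact ENNReal.mul_lt_top ENNReal.coe_lt_top (by simp [Measure.dirac_apply_of_mem])
  -- mutual singularity
  set A : Set X := ⋃ i ∈ Finset.univ.filter (fun i => α i < 0), ({z i} : Set X) with hA
  have hAmeas : MeasurableSet A :=
    Finset.measurableSet_biUnion _ fun i _ => measurableSet_singleton _
  have hmemA : ∀ i, z i ∈ A ↔ α i < 0 := by
    intro i
    simp only [hA, Set.mem_iUnion, Set.mem_singleton_iff, Finset.mem_filter, Finset.mem_univ,
      true_and]
    constructor
    · rintro ⟨j, hj, hji⟩; rw [hz hji]; exact hj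
    · exact fun h => ⟨i, h, rfl⟩
  have hμpA : μp A = 0 := by
    rw [hμp, Measure.finset_sum_apply]
    refine Finset.sum_eq_zero fun i _ => ?_
    rw [Measure.smul_apply]
    by_cases h : α i < 0
    · simp [Real.toNNReal_of_nonpos h.le]
    · have : z i ∉ A := fun hm => h ((hmemA i).1 hm)
      simp [Measure.dirac_apply' _ hAmeas, Set.indicator_apply, this]
  have hμmAc : μm Aᶜ = 0 := by
    rw [hμm, Measure.finset_sum_apply]
    refine Finset.sum_eq_zero fun i _ => ?_
    rw [Measure.smul_apply]
    by_cases h : α i < 0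
    · have : z i ∈ A := (hmemA i).2 h
      simp [Measure.dirac_apply' _ hAmeas.compl, Set.indicator_apply, this]
    · have : -α i ≤ 0 := by linarith [not_lt.1 h]
      simp [Real.toNNReal_of_nonpos this]
  have hfp : IsFiniteMeasure μp := hfin α
  have hfm : IsFiniteMeasure μm := hfin (fun i => -α i)
  set J : JordanDecomposition X :=
    { posPart := μp, negPart := μm, posPart_finite := hfp, negPart_finite := hfm
      mutuallySingular := ⟨A, hAmeas, hμpA, hμmAc⟩ } with hJ
  set Q : SignedMeasure X := J.toSignedMeasure with hQ
  have hQJ : Q.toJordanDecomposition = J := J.toJordanDecomposition_toSignedMeasure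
  -- integrals against the discrete measures
  have hint : ∀ (c : Fin N → ℝ),
      Integrable φ (∑ i, (((c i).toNNReal : ℝ≥0∞)) • Measure.dirac (z i)) := by
    intro c
    exact integrable_finset_sum_measure.2 fun i _ =>
      (hdir (z i)).smul_measure ENNReal.coe_ne_top
  have hQint : kmeIntegrable φ Q := by
    constructor <;> rw [hQJ] <;> exact hint _
  have hintegral : ∀ (c : Fin N → ℝ),
      (∫ x, φ x ∂(∑ i, (((c i).toNNReal : ℝ≥0∞)) • Measure.dirac (z i)))
        = ∑ i, ((c i).toNNReal : ℝ) • φ (z i) := by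
    intro c
    rw [integral_finset_sum_measure fun i _ => (hdir (z i)).smul_measure ENNReal.coe_ne_top]
    refine Finset.sum_congr rfl fun i _ => ?_
    rw [integral_smul_measure, integral_dirac]
    simp
  have hQemb : kmeSigned φ Q = ∑ i, α i • φ (z i) := by
    rw [kmeSigned, hQJ]
    show (∫ x, φ x ∂μp) - (∫ x, φ x ∂μm) = _
    rw [hμp, hμm, hintegral α, hintegral (fun i => -α i), ← Finset.sum_sub_distrib]
    refine Finset.sum_congr rfl fun i _ => ?_
    rw [← sub_smul]
    congr 1
    rw [Real.coe_toNNReal', Real.coe_toNNReal']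
    rcases le_total (α i) 0 with h | h
    · simp [max_eq_right h, max_eq_left (neg_nonneg.2 h)]
    · simp [max_eq_left h, max_eq_right (neg_nonpos.2 h)]
  -- P = Q by injectivity
  have hPQ : P = Q := hinj P Q hPint hQint (by rw [hemb, hQemb])
  -- the value of Q on measurable sets
  have key : ∀ s : Set X, MeasurableSet s → Q s = ∑ i, if z i ∈ s then α i else 0 := by
    intro s hs
    have : Q s = (μp s).toReal - (μm s).toReal := by
      rw [hQ]
      exact Measure.toSignedMeasure_sub_apply hs
    rw [this, hμp, hμm, happ α s, happ (fun i => -α i) s, ← Finset.sum_sub_distrib]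
    refine Finset.sum_congr rfl fun i _ => ?_
    by_cases h : z i ∈ s
    · simp only [h, if_true]
      rw [Real.coe_toNNReal', Real.coe_toNNReal']
      rcases le_total (α i) 0 with h' | h'
      · simp [max_eq_right h', max_eq_left (neg_nonneg.2 h')]
      · simp [max_eq_left h', max_eq_right (neg_nonpos.2 h')]
    · simp [h]
  have hQuniv : Q Set.univ = ∑ i, α i := by
    rw [key Set.univ MeasurableSet.univ]; simp
  have hQsingle : ∀ i, Q ({z i} : Set X) = α i := by
    intro i
    rw [key _ (measurableSet_singleton _)]
    rw [Finset.sum_eq_single i]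
    · simp
    · intro j _ hji
      have : z j ≠ z i := fun h => hji (hz h)
      simp [this]
    · simp
  rw [hPQ]
  constructor
  · rintro ⟨hpos, huniv⟩
    refine ⟨by rw [← hQuniv, huniv], fun i => ?_⟩
    rw [← hQsingle i]
    exact hpos _ (measurableSet_singleton _)
  · rintro ⟨hsum, hpos⟩
    constructor
    · intro s hs
      rw [key s hs]
      exact Finset.sum_nonneg fun i _ => by by_cases h : z i ∈ s <;> simp [h, hpos i]
    · rw [hQuniv, hsum]
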